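/- Let ρ_{AB} = ∑_k p_k τ_k ⊗ ω_k be a separable state in M_{d_A} ⊗ M_{d_B} with τ_k, ω_k density matrices and {p_k} a probability distribution, and let σ ∈ M_{d_B} be a density matrix with full support. Then D(ρ_{AB} ‖ ρ_A ⊗ σ) ≤ ∑_k p_k D(ω_k ‖ σ), where ρ_A = ∑_k p_k τ_k. -/

import Mathlib

open scoped ComplexOrder
open Kronecker

/-- Matrix logarithm (base 2) of a Hermitian matrix via the functional calculus
(junk value `0` on non-Hermitian matrices). -/
noncomputable def mlog2 {n : Type*} [Fintype n] [DecidableEq n] (A : Matrix n n ℂ) :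
    Matrix n n ℂ :=
  if h : A.IsHermitian then h.cfc (fun x => Real.logb 2 x) else 0

/-- Quantum relative entropy (base 2): `D(ρ‖σ) = Tr(ρ log₂ ρ) − Tr(ρ log₂ σ)`. -/
noncomputable def relEnt {n : Type*} [Fintype n] [DecidableEq n]
    (ρ σ : Matrix n n ℂ) : ℝ :=
  ((ρ * mlog2 ρ).trace).re - ((ρ * mlog2 σ).trace).re

/-!
In eigenbases `A = U diag(a) U*`, `B = V diag(b) V*`, with overlap weights
`w i j = |(U* V) i j|²`, the scalar identity
`∫₀^∞ l (l - m) / ((l + s m)(1 + s)) ds = l ln l - l ln m` gives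
`ln 2 · D(A‖B) = ∫₀^∞ (Q_s(A, B) - tr A / (1 + s)) ds / s` (integrand `relEntDensity`), where
`Q_s(A, B) = ∑ w i j a_i² / (a_i + s b_j)` (`quadMax`) is the supremum over `Z` of
`2 Re tr(Z* A) - tr(Z* A Z) - s tr(Z* Z B)` (`quadForm`), a function linear in `(A, B)`.
Evaluating at the maximiser `Z` for `(ρ_AB, ρ_A ⊗ σ) = ∑ p_k (τ_k ⊗ ω_k, τ_k ⊗ σ)` bounds
`Q_s(ρ_AB, ρ_A ⊗ σ)` by `∑ p_k Q_s(τ_k ⊗ ω_k, τ_k ⊗ σ) = ∑ p_k Q_s(ω_k, σ)`, computed in product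
eigenbases using `tr τ_k = 1`. The trace terms agree as well, so the bound integrates to the claim;
the left integral converges because `σ` is invertible, so `ker(ρ_A ⊗ σ) ⊆ ker ρ_AB`.
-/

open Matrix MeasureTheory Set Filter Complex Topology ComplexConjugate

namespace RelEnt

noncomputable def relEntKernel (l m s : ℝ) : ℝ := l * (l - m) / ((l + s * m) * (1 + s))

section

variable {l m : ℝ}

lemma hasDerivAt_relEntKernel_primitive (hl : 0 < l) (hm : 0 ≤ m) {s : ℝ} (hs : 0 ≤ s) :
    HasDerivAt (fun u => l * (Real.log (1 + u) - Real.log (l + u * m)))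
      (relEntKernel l m s) s := by
  have h1 : 0 < 1 + s := by linarith
  have h2 : 0 < l + s * m := by positivity
  have d1 := ((hasDerivAt_id s).const_add 1).log h1.ne'
  have d2 := (((hasDerivAt_id s).mul_const m).const_add l).log h2.ne'
  refine ((d1.sub d2).const_mul l).congr_deriv ?_
  simp only [relEntKernel, id]
  field_simp
  ring

lemma tendsto_relEntKernel_primitive (hl : 0 < l) (hm : 0 < m) :
    Tendsto (fun u => l * (Real.log (1 + u) - Real.log (l + u * m))) atTop
      (𝓝 (-(l * Real.log m))) := by
  have hlim : Tendsto (fun u : ℝ => m + (l - m) / (1 + u)) atTop (𝓝 m) := by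
    simpa using tendsto_const_nhds.add
      (tendsto_const_nhds.div_atTop (tendsto_atTop_add_const_left _ (1 : ℝ) tendsto_id))
  refine (((Real.continuousAt_log hm.ne').tendsto.comp hlim).const_mul l).neg.congr' ?_
  filter_upwards [eventually_ge_atTop 0] with u hu
  have h1 : 0 < 1 + u := by linarith
  have h2 : 0 < l + u * m := by positivity
  have : m + (l - m) / (1 + u) = (l + u * m) / (1 + u) := by field_simp; ring
  simp only [Function.comp_apply, this, Real.log_div h2.ne' h1.ne']
  ring

lemma integrableOn_relEntKernel (hl : 0 < l) (hm : 0 < m) :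
    IntegrableOn (relEntKernel l m) (Ioi 0) := by
  have hderiv := fun s (hs : s ∈ Ici (0 : ℝ)) => hasDerivAt_relEntKernel_primitive hl hm.le hs
  rcases le_total m l with h | h
  · refine integrableOn_Ioi_deriv_of_nonneg' hderiv (fun s (hs : 0 < s) => ?_)
      (tendsto_relEntKernel_primitive hl hm)
    have : 0 ≤ l - m := by linarith
    unfold relEntKernel
    positivity
  · refine integrableOn_Ioi_deriv_of_nonpos' hderiv (fun s (hs : 0 < s) => ?_)
      (tendsto_relEntKernel_primitive hl hm)
    exact div_nonpos_of_nonpos_of_nonneg (mul_nonpos_of_nonneg_of_nonpos hl.le (by linarith))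
      (by positivity)

lemma integral_relEntKernel (hl : 0 < l) (hm : 0 < m) :
    ∫ s in Ioi 0, relEntKernel l m s = l * Real.log l - l * Real.log m := by
  rw [integral_Ioi_of_hasDerivAt_of_tendsto'
    (fun s hs => hasDerivAt_relEntKernel_primitive hl hm.le hs)
    (integrableOn_relEntKernel hl hm) (tendsto_relEntKernel_primitive hl hm)]
  simp
  ring

lemma relEntKernel_eq (hl : 0 ≤ l) (hm : 0 ≤ m) {s : ℝ} (hs : 0 < s) :
    relEntKernel l m s = (l ^ 2 / (l + s * m) - l / (1 + s)) / s := by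
  rcases hl.eq_or_lt with rfl | hl
  · simp [relEntKernel]
  · have : 0 < l + s * m := by positivity
    unfold relEntKernel
    field_simp
    ring

lemma integrableOn_mul_relEntKernel {c : ℝ} (hl : 0 ≤ l) (h : c = 0 ∨ l = 0 ∨ 0 < m) :
    IntegrableOn (fun s => c * relEntKernel l m s) (Ioi 0) := by
  rcases h with rfl | rfl | hm
  · simp
  · simp [relEntKernel]
  · rcases hl.eq_or_lt with rfl | hl
    · simp [relEntKernel]
    · exact (integrableOn_relEntKernel hl hm).const_mul c

lemma integral_mul_relEntKernel {c : ℝ} (hl : 0 ≤ l) (h : c = 0 ∨ l = 0 ∨ 0 < m) :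
    ∫ s in Ioi 0, c * relEntKernel l m s = c * (l * Real.log l - l * Real.log m) := by
  rcases h with rfl | rfl | hm
  · simp
  · simp [relEntKernel]
  · rcases hl.eq_or_lt with rfl | hl
    · simp [relEntKernel]
    · rw [integral_const_mul, integral_relEntKernel hl hm]

end

lemma two_mul_re_conj_mul_sub_le {z x : ℂ} {d : ℝ} (hd : 0 ≤ d) (hx : d = 0 → x = 0) :
    2 * (conj z * x).re - d * normSq z ≤ normSq x / d := by
  rcases hd.eq_or_lt with rfl | hd
  · simp [hx rfl]
  · have hsq : normSq (x - d * z) = normSq x - 2 * d * (conj z * x).re + d ^ 2 * normSq z := by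
      simp only [normSq_apply, sub_re, sub_im, mul_re, mul_im, ofReal_re, ofReal_im, conj_re,
        conj_im]
      ring
    rw [le_div_iff₀ hd]
    nlinarith [normSq_nonneg (x - d * z)]

lemma two_mul_re_conj_mul_sub_of_eq (x : ℂ) (d : ℝ) :
    2 * (conj (x / d) * x).re - d * normSq (x / d) = normSq x / d := by
  rcases eq_or_ne d 0 with rfl | hd
  · simp
  · rw [map_div₀, conj_ofReal, div_mul_eq_mul_div, ← normSq_eq_conj_mul_self, normSq_div,
      normSq_ofReal, ← ofReal_div, ofReal_re]
    field_simp
    ring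

section

variable {n : Type*} [Fintype n]

noncomputable def quadForm (s : ℝ) (A B Z : Matrix n n ℂ) : ℝ :=
  2 * (star Z * A).trace.re - (star Z * A * Z).trace.re - s * (star Z * Z * B).trace.re

lemma quadForm_sum_smul {ι : Type*} [Fintype ι] (s : ℝ) (p : ι → ℝ) (A B : ι → Matrix n n ℂ)
    (Z : Matrix n n ℂ) :
    quadForm s (∑ k, p k • A k) (∑ k, p k • B k) Z = ∑ k, p k * quadForm s (A k) (B k) Z := by
  simp only [quadForm, Finset.mul_sum, Matrix.mul_smul, Matrix.smul_mul, Finset.sum_mul,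
    trace_sum, trace_smul, re_sum, smul_re, smul_eq_mul, ← Finset.sum_sub_distrib]
  exact Finset.sum_congr rfl fun k _ => by ring

lemma re_trace_star_mul (W M : Matrix n n ℂ) :
    (star W * M).trace.re = ∑ i, ∑ j, (conj (W i j) * M i j).re := by
  rw [Finset.sum_comm]
  simp [Matrix.trace, Matrix.mul_apply]

lemma mulVec_eq_zero_of_sum_posSemidef {ι : Type*} [Fintype ι] {C : ι → Matrix n n ℂ}
    (hC : ∀ k, (C k).PosSemidef) {v : n → ℂ} (hv : (∑ k, C k) *ᵥ v = 0) (k : ι) : C k *ᵥ v = 0 := by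
  rw [← (hC k).dotProduct_mulVec_zero_iff]
  have h0 : ∑ k, star v ⬝ᵥ (C k *ᵥ v) = 0 := by
    rw [← dotProduct_sum, ← sum_mulVec, hv, dotProduct_zero]
  exact (Finset.sum_eq_zero_iff_of_nonneg fun k _ => (hC k).dotProduct_mulVec_nonneg v).mp h0 k
    (Finset.mem_univ k)

end

lemma sum_smul_kronecker {m n ι : Type*} [Fintype ι] (p : ι → ℝ) (τ : ι → Matrix m m ℂ)
    (σ : Matrix n n ℂ) :
    (∑ k, p k • τ k) ⊗ₖ σ = ∑ k, p k • (τ k ⊗ₖ σ) := by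
  ext
  simp only [kroneckerMap_apply, Matrix.sum_apply, Matrix.smul_apply, Finset.sum_mul,
    smul_mul_assoc]

lemma re_trace_separable {m n ι : Type*} [Fintype m] [Fintype n] [Fintype ι] (p : ι → ℝ)
    {τ : ι → Matrix m m ℂ} (ω : ι → Matrix n n ℂ) (hτ1 : ∀ k, (τ k).trace = 1) :
    (∑ k, p k • (τ k ⊗ₖ ω k)).trace.re = ∑ k, p k * (ω k).trace.re := by
  simp [trace_sum, trace_kronecker, hτ1]

section

variable {n : Type*} [Fintype n] [DecidableEq n]

noncomputable def diagConj (U : unitaryGroup n ℂ) (α : n → ℝ) : Matrix n n ℂ :=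
  (U : Matrix n n ℂ) * diagonal (fun i => (α i : ℂ)) * star (U : Matrix n n ℂ)

lemma _root_.Matrix.IsHermitian.eq_diagConj {A : Matrix n n ℂ} (hA : A.IsHermitian) :
    A = diagConj hA.eigenvectorUnitary hA.eigenvalues :=
  hA.spectral_theorem

lemma _root_.Matrix.IsHermitian.re_trace_eq_sum_eigenvalues {A : Matrix n n ℂ}
    (hA : A.IsHermitian) : A.trace.re = ∑ i, hA.eigenvalues i := by
  simp [hA.trace_eq_sum_eigenvalues]

noncomputable def overlap (U V : unitaryGroup n ℂ) (i j : n) : ℝ :=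
  normSq ((star (U : Matrix n n ℂ) * V) i j)

lemma sum_overlap_right (U V : unitaryGroup n ℂ) (i : n) : ∑ j, overlap U V i j = 1 := by
  set W := star (U : Matrix n n ℂ) * V
  have hW : W * star W = 1 := by
    simp [W, Matrix.mul_assoc, ← Matrix.mul_assoc (V : Matrix n n ℂ)]
  have h := congrFun (congrFun hW i) i
  simp only [Matrix.mul_apply, star_apply, RCLike.star_def, mul_conj, one_apply_eq] at h
  exact_mod_cast h

lemma star_mul_cancel_left (U : unitaryGroup n ℂ) (X : Matrix n n ℂ) :
    star (U : Matrix n n ℂ) * (U * X) = X := by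
  rw [← Matrix.mul_assoc, UnitaryGroup.star_mul_self, Matrix.one_mul]

noncomputable def quadMax (s : ℝ) (U : unitaryGroup n ℂ) (α : n → ℝ)
    (V : unitaryGroup n ℂ) (β : n → ℝ) : ℝ :=
  ∑ i, ∑ j, overlap U V i j * (α i ^ 2 / (α i + s * β j))

lemma quadForm_diagConj (s : ℝ) (U V : unitaryGroup n ℂ) (α β : n → ℝ) (W : Matrix n n ℂ) :
    quadForm s (diagConj U α) (diagConj V β) (U * W * star (V : Matrix n n ℂ))
      = ∑ i, ∑ j, (2 * (conj (W i j) * (α i * (star (U : Matrix n n ℂ) * V) i j)).re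
          - (α i + s * β j) * normSq (W i j)) := by
  have hV : star (V : Matrix n n ℂ) * V = 1 := UnitaryGroup.star_mul_self V
  have h1 : (star ((U : Matrix n n ℂ) * W * star (V : Matrix n n ℂ)) * diagConj U α).trace
      = (star W * (diagonal (fun i => (α i : ℂ)) * (star (U : Matrix n n ℂ) * V))).trace := by
    simp only [diagConj, star_mul, star_star, Matrix.mul_assoc, star_mul_cancel_left]
    rw [trace_mul_comm]
    simp only [Matrix.mul_assoc]
  have h2 : (star ((U : Matrix n n ℂ) * W * star (V : Matrix n n ℂ)) * diagConj U α
      * (U * W * star (V : Matrix n n ℂ))).trace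
      = (star W * (diagonal (fun i => (α i : ℂ)) * W)).trace := by
    simp only [diagConj, star_mul, star_star, Matrix.mul_assoc, star_mul_cancel_left]
    rw [trace_mul_comm]
    simp only [Matrix.mul_assoc, hV, Matrix.mul_one]
  have h3 : (star ((U : Matrix n n ℂ) * W * star (V : Matrix n n ℂ))
      * (U * W * star (V : Matrix n n ℂ)) * diagConj V β).trace
      = (star W * (W * diagonal (fun j => (β j : ℂ)))).trace := by
    simp only [diagConj, star_mul, star_star, Matrix.mul_assoc, star_mul_cancel_left]
    rw [trace_mul_comm]
    simp only [Matrix.mul_assoc, hV, Matrix.mul_one]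
  have hnorm : ∀ (z : ℂ) (a : ℝ), (conj z * (a * z)).re = a * normSq z := fun z a => by
    rw [mul_left_comm, ← normSq_eq_conj_mul_self, ← ofReal_mul, ofReal_re]
  rw [quadForm, h1, h2, h3, re_trace_star_mul, re_trace_star_mul, re_trace_star_mul,
    Finset.mul_sum, Finset.mul_sum, ← Finset.sum_sub_distrib, ← Finset.sum_sub_distrib]
  refine Finset.sum_congr rfl fun i _ => ?_
  simp only [Finset.mul_sum, ← Finset.sum_sub_distrib, diagonal_mul, mul_diagonal]
  refine Finset.sum_congr rfl fun j _ => ?_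
  rw [hnorm, mul_comm (W i j), hnorm]
  ring

lemma quadForm_le_quadMax {s : ℝ} (hs : 0 ≤ s) (U V : unitaryGroup n ℂ) {α β : n → ℝ}
    (hα : ∀ i, 0 ≤ α i) (hβ : ∀ j, 0 ≤ β j) (Z : Matrix n n ℂ) :
    quadForm s (diagConj U α) (diagConj V β) Z ≤ quadMax s U α V β := by
  obtain ⟨W, rfl⟩ : ∃ W, Z = U * W * star (V : Matrix n n ℂ) :=
    ⟨star (U : Matrix n n ℂ) * Z * V, by
      simp [Matrix.mul_assoc, ← Matrix.mul_assoc (U : Matrix n n ℂ)]⟩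
  rw [quadForm_diagConj]
  refine Finset.sum_le_sum fun i _ => Finset.sum_le_sum fun j _ => ?_
  have hd : 0 ≤ α i + s * β j := add_nonneg (hα i) (mul_nonneg hs (hβ j))
  refine (two_mul_re_conj_mul_sub_le hd fun h => ?_).trans_eq ?_
  · have : α i = 0 := by nlinarith [hα i, mul_nonneg hs (hβ j)]
    simp [this]
  · rw [normSq_mul, normSq_ofReal, overlap]
    ring

lemma exists_quadForm_eq_quadMax (s : ℝ) (U V : unitaryGroup n ℂ) (α β : n → ℝ) :
    ∃ Z, quadForm s (diagConj U α) (diagConj V β) Z = quadMax s U α V β := by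
  refine ⟨U * of (fun i j => α i * (star (U : Matrix n n ℂ) * V) i j / (α i + s * β j : ℝ))
    * star (V : Matrix n n ℂ), ?_⟩
  rw [quadForm_diagConj]
  refine Finset.sum_congr rfl fun i _ => Finset.sum_congr rfl fun j _ => ?_
  rw [of_apply, two_mul_re_conj_mul_sub_of_eq, normSq_mul, normSq_ofReal, overlap]
  ring

lemma overlap_self (U : unitaryGroup n ℂ) (i j : n) :
    overlap U U i j = if i = j then 1 else 0 := by
  simp [overlap, one_apply, apply_ite]

lemma re_trace_diagConj_mul_diagConj (U V : unitaryGroup n ℂ) (α β : n → ℝ) :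
    (diagConj U α * diagConj V β).trace.re = ∑ i, ∑ j, overlap U V i j * (α i * β j) := by
  have h : (diagConj U α * diagConj V β).trace = (star (star (U : Matrix n n ℂ) * V)
      * (diagonal (fun i => (α i : ℂ)) * (star (U : Matrix n n ℂ) * V)
        * diagonal (fun j => (β j : ℂ)))).trace := by
    simp only [diagConj, star_mul, star_star, Matrix.mul_assoc]
    conv_rhs => rw [trace_mul_comm]
    simp only [Matrix.mul_assoc]
  rw [h, re_trace_star_mul]
  refine Finset.sum_congr rfl fun i _ => Finset.sum_congr rfl fun j _ => ?_
  rw [mul_diagonal, diagonal_mul, overlap]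
  simp only [mul_re, mul_im, conj_re, conj_im, ofReal_re, ofReal_im, normSq_apply]
  ring

lemma mlog2_eq_diagConj {A : Matrix n n ℂ} (hA : A.IsHermitian) :
    mlog2 A = diagConj hA.eigenvectorUnitary (fun i => Real.logb 2 (hA.eigenvalues i)) := by
  rw [mlog2, dif_pos hA]
  rfl

lemma relEnt_eq_sum_overlap {A B : Matrix n n ℂ} (hA : A.IsHermitian) (hB : B.IsHermitian) :
    relEnt A B = ∑ i, ∑ j, overlap hA.eigenvectorUnitary hB.eigenvectorUnitary i j
      * (hA.eigenvalues i * Real.logb 2 (hA.eigenvalues i)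
        - hA.eigenvalues i * Real.logb 2 (hB.eigenvalues j)) := by
  have hA' : ∀ X, A * X = diagConj hA.eigenvectorUnitary hA.eigenvalues * X := fun X => by
    rw [← hA.eq_diagConj]
  rw [relEnt, mlog2_eq_diagConj hA, mlog2_eq_diagConj hB, hA', hA']
  simp only [re_trace_diagConj_mul_diagConj, overlap_self, ite_mul, one_mul, zero_mul,
    Finset.sum_ite_eq, Finset.mem_univ, if_true, mul_sub, Finset.sum_sub_distrib]
  congr 1
  refine Finset.sum_congr rfl fun i _ => ?_
  rw [← Finset.sum_mul, sum_overlap_right, one_mul]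

lemma overlap_eq_zero_of_ker_le {U V : unitaryGroup n ℂ} {α β : n → ℝ}
    (hker : ∀ v, diagConj V β *ᵥ v = 0 → diagConj U α *ᵥ v = 0) {i j : n} (hi : α i ≠ 0)
    (hj : β j = 0) : overlap U V i j = 0 := by
  have hcol : diagConj U α *ᵥ (V *ᵥ Pi.single j 1) = 0 := hker _ <| by
    rw [mulVec_mulVec, diagConj, Matrix.mul_assoc, Matrix.mul_assoc, UnitaryGroup.star_mul_self,
      Matrix.mul_one, ← mulVec_mulVec, diagonal_mulVec_single, hj, ofReal_zero, zero_mul,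
      Pi.single_zero, mulVec_zero]
  have hentry : (star (U : Matrix n n ℂ) * diagConj U α * V) i j
      = α i * (star (U : Matrix n n ℂ) * V) i j := by
    simp only [diagConj, Matrix.mul_assoc, star_mul_cancel_left, diagonal_mul]
  have hzero : (star (U : Matrix n n ℂ) * diagConj U α * V) i j = 0 := by
    have := congrFun
      (mulVec_single_one (star (U : Matrix n n ℂ) * diagConj U α * (V : Matrix n n ℂ)) j) i
    rw [← mulVec_mulVec, ← mulVec_mulVec, hcol, mulVec_zero] at this
    simpa using this.symm
  rw [hentry] at hzero
  simp [overlap, (mul_eq_zero.mp hzero).resolve_left (by exact_mod_cast hi)]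

lemma overlap_eq_zero_or_of_ker_le {A B : Matrix n n ℂ} (hA : A.PosSemidef) (hB : B.PosSemidef)
    (hker : ∀ v, B *ᵥ v = 0 → A *ᵥ v = 0) (i j : n) :
    overlap hA.1.eigenvectorUnitary hB.1.eigenvectorUnitary i j = 0
      ∨ hA.1.eigenvalues i = 0 ∨ 0 < hB.1.eigenvalues j := by
  rw [hA.1.eq_diagConj, hB.1.eq_diagConj] at hker
  by_cases hi : hA.1.eigenvalues i = 0
  · exact .inr (.inl hi)
  rcases (hB.eigenvalues_nonneg j).eq_or_lt with hj | hj
  · exact .inl (overlap_eq_zero_of_ker_le hker hi hj.symm)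
  · exact .inr (.inr hj)

noncomputable def relEntDensity (s : ℝ) (U : unitaryGroup n ℂ) (α : n → ℝ)
    (V : unitaryGroup n ℂ) (β : n → ℝ) : ℝ :=
  ∑ i, ∑ j, overlap U V i j * relEntKernel (α i) (β j) s

lemma relEntDensity_eq {s : ℝ} (hs : 0 < s) (U V : unitaryGroup n ℂ) {α β : n → ℝ}
    (hα : ∀ i, 0 ≤ α i) (hβ : ∀ j, 0 ≤ β j) :
    relEntDensity s U α V β = (quadMax s U α V β - (∑ i, α i) / (1 + s)) / s := by
  have hrow : ∑ i, α i / (1 + s) = ∑ i, ∑ j, overlap U V i j * (α i / (1 + s)) := by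
    simp only [← Finset.sum_mul, sum_overlap_right, one_mul]
  rw [Finset.sum_div, hrow, quadMax, ← Finset.sum_sub_distrib, Finset.sum_div]
  refine Finset.sum_congr rfl fun i _ => ?_
  rw [← Finset.sum_sub_distrib, Finset.sum_div]
  refine Finset.sum_congr rfl fun j _ => ?_
  rw [relEntKernel_eq (hα i) (hβ j) hs]
  ring

lemma integrableOn_relEntDensity {A B : Matrix n n ℂ} (hA : A.PosSemidef) (hB : B.PosSemidef)
    (hker : ∀ v, B *ᵥ v = 0 → A *ᵥ v = 0) :
    IntegrableOn (fun s => relEntDensity s hA.1.eigenvectorUnitary hA.1.eigenvalues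
      hB.1.eigenvectorUnitary hB.1.eigenvalues) (Ioi 0) :=
  integrable_finsetSum _ fun i _ => integrable_finsetSum _ fun j _ =>
    integrableOn_mul_relEntKernel (hA.eigenvalues_nonneg i)
      (overlap_eq_zero_or_of_ker_le hA hB hker i j)

lemma integral_relEntDensity {A B : Matrix n n ℂ} (hA : A.PosSemidef) (hB : B.PosSemidef)
    (hker : ∀ v, B *ᵥ v = 0 → A *ᵥ v = 0) :
    ∫ s in Ioi 0, relEntDensity s hA.1.eigenvectorUnitary hA.1.eigenvalues
      hB.1.eigenvectorUnitary hB.1.eigenvalues = Real.log 2 * relEnt A B := by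
  have hint := fun i j => integrableOn_mul_relEntKernel (hA.eigenvalues_nonneg i)
    (overlap_eq_zero_or_of_ker_le hA hB hker i j)
  simp only [relEntDensity]
  rw [integral_finsetSum _ fun i _ => integrable_finsetSum _ fun j _ => hint i j,
    relEnt_eq_sum_overlap hA.1 hB.1, Finset.mul_sum]
  refine Finset.sum_congr rfl fun i _ => ?_
  rw [integral_finsetSum _ fun j _ => hint i j, Finset.mul_sum]
  refine Finset.sum_congr rfl fun j _ => ?_
  rw [integral_mul_relEntKernel (hA.eigenvalues_nonneg i)
    (overlap_eq_zero_or_of_ker_le hA hB hker i j), Real.logb, Real.logb]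
  field_simp

end

section

variable {m n : Type*} [Fintype m] [DecidableEq m] [Fintype n] [DecidableEq n]

def kroneckerUnitary (P : unitaryGroup m ℂ) (Q : unitaryGroup n ℂ) : unitaryGroup (m × n) ℂ :=
  ⟨(P : Matrix m m ℂ) ⊗ₖ (Q : Matrix n n ℂ), kronecker_mem_unitary P.2 Q.2⟩

lemma diagConj_kronecker (P : unitaryGroup m ℂ) (Q : unitaryGroup n ℂ) (t : m → ℝ) (w : n → ℝ) :
    diagConj P t ⊗ₖ diagConj Q w = diagConj (kroneckerUnitary P Q) (fun i => t i.1 * w i.2) := by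
  simp only [diagConj, kroneckerUnitary, mul_kronecker_mul, diagonal_kronecker_diagonal,
    star_eq_conjTranspose, conjTranspose_kronecker, ofReal_mul]

lemma overlap_kronecker (P : unitaryGroup m ℂ) (Q R : unitaryGroup n ℂ) (i j : m × n) :
    overlap (kroneckerUnitary P Q) (kroneckerUnitary P R) i j
      = if i.1 = j.1 then overlap Q R i.2 j.2 else 0 := by
  have h : star ((P : Matrix m m ℂ) ⊗ₖ (Q : Matrix n n ℂ)) * ((P : Matrix m m ℂ) ⊗ₖ R)
      = 1 ⊗ₖ (star (Q : Matrix n n ℂ) * (R : Matrix n n ℂ)) := by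
    rw [star_eq_conjTranspose, conjTranspose_kronecker, ← mul_kronecker_mul,
      ← star_eq_conjTranspose, ← star_eq_conjTranspose, UnitaryGroup.star_mul_self]
  simp only [overlap, kroneckerUnitary, h, kroneckerMap_apply, one_apply]
  split_ifs <;> simp

lemma quadMax_kronecker (s : ℝ) (P : unitaryGroup m ℂ) (Q R : unitaryGroup n ℂ)
    (t : m → ℝ) (w g : n → ℝ) :
    quadMax s (kroneckerUnitary P Q) (fun i => t i.1 * w i.2)
        (kroneckerUnitary P R) (fun j => t j.1 * g j.2)
      = (∑ a, t a) * quadMax s Q w R g := by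
  have hscale : ∀ a b d, (t a * w b) ^ 2 / (t a * w b + s * (t a * g d))
      = t a * (w b ^ 2 / (w b + s * g d)) := fun a b d => by
    rcases eq_or_ne (t a) 0 with h | h
    · simp [h]
    · rw [show t a * w b + s * (t a * g d) = t a * (w b + s * g d) by ring,
        show (t a * w b) ^ 2 = t a * (t a * w b ^ 2) by ring, mul_div_mul_left _ _ h, mul_div_assoc]
  have hrow : ∀ a b, ∑ j : m × n, overlap (kroneckerUnitary P Q) (kroneckerUnitary P R) (a, b) j
      * ((t a * w b) ^ 2 / (t a * w b + s * (t j.1 * g j.2)))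
      = t a * ∑ d, overlap Q R b d * (w b ^ 2 / (w b + s * g d)) := fun a b => by
    rw [Fintype.sum_prod_type, Finset.sum_eq_single a (fun c _ hc => by
      simp [overlap_kronecker, Ne.symm hc]) (by simp)]
    simp only [overlap_kronecker, if_true, hscale, Finset.mul_sum]
    exact Finset.sum_congr rfl fun d _ => by ring
  simp only [quadMax, hrow, Fintype.sum_prod_type, ← Finset.mul_sum, Finset.sum_mul]

lemma quadForm_kronecker_le {s : ℝ} (hs : 0 ≤ s) {τ : Matrix m m ℂ} {ω σ : Matrix n n ℂ}
    (hτ : τ.PosSemidef) (hω : ω.PosSemidef) (hσ : σ.PosSemidef) (Z : Matrix (m × n) (m × n) ℂ) :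
    quadForm s (τ ⊗ₖ ω) (τ ⊗ₖ σ) Z ≤ τ.trace.re * quadMax s
      hω.1.eigenvectorUnitary hω.1.eigenvalues hσ.1.eigenvectorUnitary hσ.1.eigenvalues := by
  calc quadForm s (τ ⊗ₖ ω) (τ ⊗ₖ σ) Z
      = quadForm s
          (diagConj (kroneckerUnitary hτ.1.eigenvectorUnitary hω.1.eigenvectorUnitary)
            (fun i => hτ.1.eigenvalues i.1 * hω.1.eigenvalues i.2))
          (diagConj (kroneckerUnitary hτ.1.eigenvectorUnitary hσ.1.eigenvectorUnitary)
            (fun j => hτ.1.eigenvalues j.1 * hσ.1.eigenvalues j.2)) Z := by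
        rw [← diagConj_kronecker, ← diagConj_kronecker, ← hτ.1.eq_diagConj, ← hω.1.eq_diagConj,
          ← hσ.1.eq_diagConj]
    _ ≤ _ := quadForm_le_quadMax hs _ _
        (fun i => mul_nonneg (hτ.eigenvalues_nonneg _) (hω.eigenvalues_nonneg _))
        (fun j => mul_nonneg (hτ.eigenvalues_nonneg _) (hσ.eigenvalues_nonneg _)) Z
    _ = _ := by
        rw [quadMax_kronecker, hτ.1.re_trace_eq_sum_eigenvalues]

end

section

variable {m n ι : Type*} [Fintype m] [DecidableEq m] [Fintype n] [DecidableEq n] [Fintype ι]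

lemma kronecker_mulVec_eq_zero_of_isUnit {τ : Matrix m m ℂ} {σ : Matrix n n ℂ} (hσ : IsUnit σ)
    (ω : Matrix n n ℂ) {v : m × n → ℂ} (hv : (τ ⊗ₖ σ) *ᵥ v = 0) : (τ ⊗ₖ ω) *ᵥ v = 0 := by
  have hfac : ∀ X : Matrix n n ℂ, τ ⊗ₖ X = (1 ⊗ₖ X) * (τ ⊗ₖ 1) := fun X => by
    rw [← mul_kronecker_mul, Matrix.one_mul, Matrix.mul_one]
  have hτ1 : (τ ⊗ₖ (1 : Matrix n n ℂ)) *ᵥ v = 0 := by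
    have := congrArg (((1 : Matrix m m ℂ) ⊗ₖ σ⁻¹) *ᵥ ·) hv
    simpa only [hfac σ, mulVec_mulVec, ← Matrix.mul_assoc, ← mul_kronecker_mul, Matrix.one_mul,
      nonsing_inv_mul σ ((isUnit_iff_isUnit_det σ).mp hσ), mulVec_zero] using this
  rw [hfac ω, ← mulVec_mulVec, hτ1, mulVec_zero]

lemma separable_ker_le {p : ι → ℝ} {τ : ι → Matrix m m ℂ} (ω : ι → Matrix n n ℂ)
    {σ : Matrix n n ℂ} (hp : ∀ k, 0 ≤ p k) (hτ : ∀ k, (τ k).PosSemidef) (hσ : σ.PosDef)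
    (v : m × n → ℂ) (hv : ((∑ k, p k • τ k) ⊗ₖ σ) *ᵥ v = 0) :
    (∑ k, p k • (τ k ⊗ₖ ω k)) *ᵥ v = 0 := by
  rw [sum_smul_kronecker] at hv
  have hk := mulVec_eq_zero_of_sum_posSemidef
    (fun k => ((hτ k).kronecker hσ.posSemidef).smul (hp k)) hv
  rw [sum_mulVec]
  refine Finset.sum_eq_zero fun k _ => ?_
  have hk := hk k
  rw [← smul_kronecker] at hk ⊢
  exact kronecker_mulVec_eq_zero_of_isUnit hσ.isUnit _ hk

lemma quadMax_separable_le {s : ℝ} (hs : 0 ≤ s) {p : ι → ℝ} {τ : ι → Matrix m m ℂ}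
    {ω : ι → Matrix n n ℂ} {σ : Matrix n n ℂ} (hp : ∀ k, 0 ≤ p k) (hτ : ∀ k, (τ k).PosSemidef)
    (hτ1 : ∀ k, (τ k).trace = 1) (hω : ∀ k, (ω k).PosSemidef) (hσ : σ.PosSemidef)
    (hρ : (∑ k, p k • (τ k ⊗ₖ ω k)).PosSemidef) (hB : ((∑ k, p k • τ k) ⊗ₖ σ).PosSemidef) :
    quadMax s hρ.1.eigenvectorUnitary hρ.1.eigenvalues hB.1.eigenvectorUnitary hB.1.eigenvalues
      ≤ ∑ k, p k * quadMax s (hω k).1.eigenvectorUnitary (hω k).1.eigenvalues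
        hσ.1.eigenvectorUnitary hσ.1.eigenvalues := by
  obtain ⟨Z, hZ⟩ := exists_quadForm_eq_quadMax s hρ.1.eigenvectorUnitary hB.1.eigenvectorUnitary
    hρ.1.eigenvalues hB.1.eigenvalues
  rw [← hρ.1.eq_diagConj, ← hB.1.eq_diagConj] at hZ
  rw [← hZ, sum_smul_kronecker, quadForm_sum_smul]
  refine Finset.sum_le_sum fun k _ => mul_le_mul_of_nonneg_left ?_ (hp k)
  simpa [hτ1 k] using quadForm_kronecker_le hs (hτ k) (hω k) hσ Z

lemma relEntDensity_separable_le {s : ℝ} (hs : 0 < s) {p : ι → ℝ} {τ : ι → Matrix m m ℂ}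
    {ω : ι → Matrix n n ℂ} {σ : Matrix n n ℂ} (hp : ∀ k, 0 ≤ p k) (hτ : ∀ k, (τ k).PosSemidef)
    (hτ1 : ∀ k, (τ k).trace = 1) (hω : ∀ k, (ω k).PosSemidef) (hσ : σ.PosSemidef)
    (hρ : (∑ k, p k • (τ k ⊗ₖ ω k)).PosSemidef) (hB : ((∑ k, p k • τ k) ⊗ₖ σ).PosSemidef) :
    relEntDensity s hρ.1.eigenvectorUnitary hρ.1.eigenvalues hB.1.eigenvectorUnitary
        hB.1.eigenvalues
      ≤ ∑ k, p k * relEntDensity s (hω k).1.eigenvectorUnitary (hω k).1.eigenvalues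
        hσ.1.eigenvectorUnitary hσ.1.eigenvalues := by
  have htrace : ∑ i, hρ.1.eigenvalues i = ∑ k, p k * ∑ b, (hω k).1.eigenvalues b := by
    simp only [← IsHermitian.re_trace_eq_sum_eigenvalues, re_trace_separable p ω hτ1]
  simp only [relEntDensity_eq hs _ _ hρ.eigenvalues_nonneg hB.eigenvalues_nonneg,
    relEntDensity_eq hs _ _ (hω _).eigenvalues_nonneg hσ.eigenvalues_nonneg, htrace]
  refine (div_le_div_of_nonneg_right (sub_le_sub_right
    (quadMax_separable_le hs.le hp hτ hτ1 hω hσ hρ hB) _) hs.le).trans_eq ?_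
  rw [Finset.sum_div, ← Finset.sum_sub_distrib, Finset.sum_div]
  exact Finset.sum_congr rfl fun k _ => by ring

end

end RelEnt

open RelEnt

theorem relEnt_separable_le_general {dA dB ι : Type*}
    [Fintype dA] [DecidableEq dA] [Fintype dB] [DecidableEq dB] [Fintype ι]
    (p : ι → ℝ) (τ : ι → Matrix dA dA ℂ) (ω : ι → Matrix dB dB ℂ)
    (σ : Matrix dB dB ℂ)
    (hp0 : ∀ k, 0 ≤ p k)
    (hτ : ∀ k, (τ k).PosSemidef) (hτ1 : ∀ k, (τ k).trace = 1)
    (hω : ∀ k, (ω k).PosSemidef)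
    (hσ : σ.PosDef) :
    relEnt (∑ k, p k • (τ k ⊗ₖ ω k)) ((∑ k, p k • τ k) ⊗ₖ σ)
      ≤ ∑ k, p k * relEnt (ω k) σ := by
  have hρ : (∑ k, p k • (τ k ⊗ₖ ω k)).PosSemidef :=
    posSemidef_sum _ fun k _ => ((hτ k).kronecker (hω k)).smul (hp0 k)
  have hB : ((∑ k, p k • τ k) ⊗ₖ σ).PosSemidef :=
    (posSemidef_sum _ fun k _ => (hτ k).smul (hp0 k)).kronecker hσ.posSemidef
  have hker := separable_ker_le ω hp0 hτ hσ
  have hσker : ∀ k v, σ *ᵥ v = 0 → ω k *ᵥ v = 0 := fun k v hv => by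
    rw [mulVec_injective_iff_isUnit.mpr hσ.isUnit (hv.trans (mulVec_zero σ).symm), mulVec_zero]
  have hint k := (integrableOn_relEntDensity (hω k) hσ.posSemidef (hσker k)).const_mul (p k)
  have hmono := setIntegral_mono_on (integrableOn_relEntDensity hρ hB hker)
    (integrable_finsetSum _ fun k _ => hint k) measurableSet_Ioi
    fun s hs => relEntDensity_separable_le hs hp0 hτ hτ1 hω hσ.posSemidef hρ hB
  simp only [integral_relEntDensity hρ hB hker, integral_finsetSum _ fun k _ => hint k,
    integral_const_mul, integral_relEntDensity (hω _) hσ.posSemidef (hσker _),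
    mul_left_comm _ (Real.log 2), ← Finset.mul_sum] at hmono
  exact le_of_mul_le_mul_left hmono (Real.log_pos one_lt_two)

/-- For a separable state `ρ_AB = ∑ₖ pₖ τₖ ⊗ ωₖ` and a full-support state `σ` on `B`,
`D(ρ_AB ‖ ρ_A ⊗ σ) ≤ ∑ₖ pₖ D(ωₖ ‖ σ)` where `ρ_A = ∑ₖ pₖ τₖ`. -/
theorem relEnt_separable_le {dA dB ι : Type*}
    [Fintype dA] [DecidableEq dA] [Fintype dB] [DecidableEq dB] [Fintype ι]
    (p : ι → ℝ) (τ : ι → Matrix dA dA ℂ) (ω : ι → Matrix dB dB ℂ)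
    (σ : Matrix dB dB ℂ)
    (hp0 : ∀ k, 0 ≤ p k) (hp1 : ∑ k, p k = 1)
    (hτ : ∀ k, (τ k).PosSemidef) (hτ1 : ∀ k, (τ k).trace = 1)
    (hω : ∀ k, (ω k).PosSemidef) (hω1 : ∀ k, (ω k).trace = 1)
    (hσ : σ.PosDef) (hσ1 : σ.trace = 1) :
    relEnt (∑ k, p k • (τ k ⊗ₖ ω k)) ((∑ k, p k • τ k) ⊗ₖ σ)
      ≤ ∑ k, p k * relEnt (ω k) σ :=
  relEnt_separable_le_general p τ ω σ hp0 hτ hτ1 hω hσ
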